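/- arXiv:1703.09155 — 10 statements merged into one kernel-verified Lean document; each statement's English description precedes it below -/
import Mathlib

section
/- Let A be a quandle and N a normal subgroup of Inn(A). Then the equivalence relation ∼_N (a ∼_N b iff n(a) = b for some n ∈ N) is a congruence on A, i.e., a ∼_N a' and b ∼_N b' imply a ◁ b ∼_N a' ◁ b' and a ◁⁻¹ b ∼_N a' ◁⁻¹ b'. -/
/-- A quandle in the sense of the paper: a set with two binary operations
`act` (`◁`) and `inv` (`◁⁻¹`) satisfying idempotency, right invertibility
and (right) self-distributivity. -/
class Quandle' (A : Type*) where
  act : A → A → A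
  inv : A → A → A
  idem : ∀ a, act a a = a
  inv_act : ∀ a b, inv (act a b) b = a
  act_inv : ∀ a b, act (inv a b) b = a
  distrib : ∀ a b c, act (act a b) c = act (act a c) (act b c)

open Quandle'

/-- A quandle homomorphism preserves both operations. -/
def IsQuandleHom {A B : Type*} [Quandle' A] [Quandle' B] (f : A → B) : Prop :=
  (∀ a a', f (act a a') = act (f a) (f a')) ∧
  (∀ a a', f (inv a a') = inv (f a) (f a'))

/-- The right translation `ρ_b : a ↦ a ◁ b`, as a permutation of `A`. -/
def rho {A : Type*} [Quandle' A] (b : A) : Equiv.Perm A :=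
  ⟨fun a => act a b, fun a => inv a b, fun a => inv_act a b, fun a => act_inv a b⟩

/-- The group of inner automorphisms of a quandle, as a subgroup of `Equiv.Perm A`. -/
def Inn (A : Type*) [Quandle' A] : Subgroup (Equiv.Perm A) :=
  Subgroup.closure (Set.range (rho (A := A)))

/-- The orbit relation `∼_N` associated with a subgroup `N ≤ Perm A`. -/
def orbitRel {A : Type*} [Quandle' A] (N : Subgroup (Equiv.Perm A)) (a b : A) : Prop :=
  ∃ n ∈ N, n a = b

/-- Two elements are in the same connected component when they are in the
same orbit of `Inn A`. -/
def sameComponent {A : Type*} [Quandle' A] (a b : A) : Prop :=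
  orbitRel (Inn A) a b

/-- Trivial extension: a surjective quandle homomorphism such that elements with the
same image lying in the same connected component are equal (condition (T)). -/
def IsTrivialExt {A B : Type*} [Quandle' A] [Quandle' B] (f : A → B) : Prop :=
  Function.Surjective f ∧ IsQuandleHom f ∧
    ∀ a a', f a = f a' → sameComponent a a' → a = a'

/-- Evaluation of a word `a₀ ◁^{α₁} a₁ ◁^{α₂} ⋯ ◁^{αₙ} aₙ`; `true` stands for
exponent `1` and `false` for exponent `-1`. -/
def wordEval {A : Type*} [Quandle' A] (a₀ : A) (l : List (Bool × A)) : A :=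
  l.foldl (fun x p => if p.1 then act x p.2 else inv x p.2) a₀

/-- Condition (N) characterizing normal extensions. -/
def CondN {A B : Type*} [Quandle' A] [Quandle' B] (f : A → B) : Prop :=
  ∀ (a₀ : A) (l : List (Bool × A)), wordEval a₀ l = a₀ →
    ∀ (a₀' : A) (l' : List (Bool × A)), f a₀' = f a₀ →
      List.Forall₂ (fun p q => p.1 = q.1 ∧ f p.2 = f q.2) l l' →
      wordEval a₀' l' = a₀'

/-- Normal extension (via condition (N)). -/
def IsNormalExt {A B : Type*} [Quandle' A] [Quandle' B] (f : A → B) : Prop :=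
  Function.Surjective f ∧ IsQuandleHom f ∧ CondN f

/-- Quandle covering in the sense of Eisermann (= central extension). -/
def IsCovering {A B : Type*} [Quandle' A] [Quandle' B] (f : A → B) : Prop :=
  Function.Surjective f ∧ IsQuandleHom f ∧
    ∀ a a' c, f a = f a' → act c a = act c a'

/-- A congruence on a quandle: an equivalence relation compatible with both operations. -/
def IsCongruence {A : Type*} [Quandle' A] (r : A → A → Prop) : Prop :=
  Equivalence r ∧
    ∀ a a' b b', r a b → r a' b' → r (act a a') (act b b') ∧ r (inv a a') (inv b b')

/-- Relational composition: `(a,b) ∈ relComp S R` iff `∃ c, R a c ∧ S c b`. -/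
def relComp {X : Type*} (S R : X → X → Prop) (a b : X) : Prop :=
  ∃ c, R a c ∧ S c b

/-- The kernel congruence of a map. -/
def eqRel {A B : Type*} (f : A → B) (a a' : A) : Prop := f a = f a'

/-- The image of a relation along a map. -/
def imageRel {A B : Type*} (f : A → B) (R : A → A → Prop) (b b' : B) : Prop :=
  ∃ a a', R a a' ∧ f a = b ∧ f a' = b'

instance prodQuandle {A B : Type*} [Quandle' A] [Quandle' B] : Quandle' (A × B) where
  act p q := (act p.1 q.1, act p.2 q.2)
  inv p q := (inv p.1 q.1, inv p.2 q.2)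
  idem p := Prod.ext (idem p.1) (idem p.2)
  inv_act p q := Prod.ext (inv_act p.1 q.1) (inv_act p.2 q.2)
  act_inv p q := Prod.ext (act_inv p.1 q.1) (act_inv p.2 q.2)
  distrib p q r := Prod.ext (distrib p.1 q.1 r.1) (distrib p.2 q.2 r.2)

/-- The pullback of `f : A → C` and `g : B → C` as a set. -/
def Pullback {A B C : Type*} (f : A → C) (g : B → C) : Type _ :=
  { p : A × B // f p.1 = g p.2 }

/-- The quandle structure on a pullback of two quandle homomorphisms. -/
def pullbackQuandle {A B C : Type*} [Quandle' A] [Quandle' B] [Quandle' C]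
    (f : A → C) (g : B → C) (hf : IsQuandleHom f) (hg : IsQuandleHom g) :
    Quandle' (Pullback f g) where
  act p q := ⟨act p.1 q.1, by
    show f (act p.1.1 q.1.1) = g (act p.1.2 q.1.2)
    rw [hf.1, hg.1, p.2, q.2]⟩
  inv p q := ⟨inv p.1 q.1, by
    show f (inv p.1.1 q.1.1) = g (inv p.1.2 q.1.2)
    rw [hf.2, hg.2, p.2, q.2]⟩
  idem p := Subtype.ext (idem p.1)
  inv_act p q := Subtype.ext (inv_act p.1 q.1)
  act_inv p q := Subtype.ext (act_inv p.1 q.1)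
  distrib p q r := Subtype.ext (distrib p.1 q.1 r.1)

/-- The congruence generated by a relation `R`. -/
def congClosure {A : Type*} [Quandle' A] (R : A → A → Prop) (a b : A) : Prop :=
  ∀ S : A → A → Prop, IsCongruence S → (∀ x y, R x y → S x y) → S a b

/-- The congruence generated by `R`, as a setoid. -/
def congClosureSetoid {A : Type*} [Quandle' A] (R : A → A → Prop) : Setoid A :=
  ⟨congClosure R,
    ⟨fun a S hS _ => hS.1.refl a,
     fun h S hS hR => hS.1.symm (h S hS hR),
     fun h1 h2 S hS hR => hS.1.trans (h1 S hS hR) (h2 S hS hR)⟩⟩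

/-- The quotient quandle by the congruence generated by `R`. -/
def quotQuandle {A : Type*} [Quandle' A] (R : A → A → Prop) :
    Quandle' (Quotient (congClosureSetoid R)) where
  act := Quotient.map₂ act
    (fun _ _ h _ _ h' S hS hR => (hS.2 _ _ _ _ (h S hS hR) (h' S hS hR)).1)
  inv := Quotient.map₂ inv
    (fun _ _ h _ _ h' S hS hR => (hS.2 _ _ _ _ (h S hS hR) (h' S hS hR)).2)
  idem q := Quotient.inductionOn q fun a => congrArg (Quotient.mk _) (idem a)
  inv_act q r := Quotient.inductionOn₂ q r fun a b => congrArg (Quotient.mk _) (inv_act a b)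
  act_inv q r := Quotient.inductionOn₂ q r fun a b => congrArg (Quotient.mk _) (act_inv a b)
  distrib q r s := Quotient.inductionOn₃ q r s fun a b c => congrArg (Quotient.mk _) (distrib a b c)


lemma rho_mem {A : Type*} [Quandle' A] (b : A) : rho b ∈ Inn A :=
  Subgroup.subset_closure ⟨b, rfl⟩

lemma inn_hom {A : Type*} [Quandle' A] :
    ∀ g ∈ Inn A, (∀ x y, g (act x y) = act (g x) (g y)) ∧
      (∀ x y, g (inv x y) = inv (g x) (g y)) := by
  intro g hg
  induction hg using Subgroup.closure_induction with
  | mem x hx =>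
    obtain ⟨c, rfl⟩ := hx
    constructor
    · intro x y
      exact distrib x y c
    · intro x y
      show act (inv x y) c = inv (act x c) (act y c)
      have h := distrib (inv x y) y c
      rw [act_inv] at h
      rw [h, inv_act]
  | one => exact ⟨fun x y => rfl, fun x y => rfl⟩
  | mul x y hx hy ihx ihy =>
    refine ⟨fun a b => ?_, fun a b => ?_⟩
    · show x (y (act a b)) = _
      rw [ihy.1, ihx.1]; rfl
    · show x (y (inv a b)) = _
      rw [ihy.2, ihx.2]; rfl
  | inv x hx ih =>
    refine ⟨fun a b => ?_, fun a b => ?_⟩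
    · apply x.injective
      show x (x⁻¹ (act a b)) = x (act (x⁻¹ a) (x⁻¹ b))
      rw [ih.1]
      simp
    · apply x.injective
      show x (x⁻¹ (inv a b)) = x (inv (x⁻¹ a) (x⁻¹ b))
      rw [ih.2]
      simp

theorem stmt7 {A : Type*} [Quandle' A] (N : Subgroup (Equiv.Perm A))
    (hle : N ≤ Inn A) (hnorm : ∀ g ∈ Inn A, ∀ n ∈ N, g * n * g⁻¹ ∈ N) :
    Equivalence (orbitRel N) ∧
      ∀ a a' b b', orbitRel N a a' → orbitRel N b b' →
        orbitRel N (act a b) (act a' b') ∧ orbitRel N (inv a b) (inv a' b') := by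
  have hconj : ∀ g ∈ Inn A, ∀ n ∈ N, g * n * g⁻¹ ∈ N := hnorm
  constructor
  · refine ⟨fun a => ⟨1, one_mem N, rfl⟩, ?_, ?_⟩
    · rintro a b ⟨n, hn, rfl⟩
      exact ⟨n⁻¹, inv_mem hn, n.symm_apply_apply a⟩
    · rintro a b c ⟨n, hn, rfl⟩ ⟨m, hm, rfl⟩
      exact ⟨m * n, mul_mem hm hn, rfl⟩
  · rintro a a' b b' ⟨n, hn, rfl⟩ ⟨m, hm, rfl⟩
    have hmInn : (m : Equiv.Perm A) ∈ Inn A := hle hm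
    have hmhom := inn_hom m hmInn
    have key : ∀ g ∈ Inn A, (m * g * m⁻¹ * n * g⁻¹ : Equiv.Perm A) ∈ N := by
      intro g hg
      have h1 : m * (g * m⁻¹ * g⁻¹) ∈ N := mul_mem hm (hconj g hg m⁻¹ (inv_mem hm))
      have h2 : g * n * g⁻¹ ∈ N := hconj g hg n hn
      have := mul_mem h1 h2
      convert this using 1
      group
    constructor
    · refine ⟨m * rho b * m⁻¹ * n * (rho b)⁻¹, key (rho b) (rho_mem b), ?_⟩
      show (m * rho b * m⁻¹ * n) ((rho b)⁻¹ (act a b)) = _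
      have : (rho b)⁻¹ (act a b) = a := (rho b).symm_apply_apply a
      rw [this]
      show m (rho b (m⁻¹ (n a))) = _
      have : rho b (m⁻¹ (n a)) = act (m⁻¹ (n a)) b := rfl
      rw [this, hmhom.1]
      congr 1
      exact m.apply_symm_apply (n a)
    · have hb : (rho b)⁻¹ ∈ Inn A := inv_mem (rho_mem b)
      refine ⟨m * (rho b)⁻¹ * m⁻¹ * n * ((rho b)⁻¹)⁻¹, key (rho b)⁻¹ hb, ?_⟩
      show (m * (rho b)⁻¹ * m⁻¹ * n) (((rho b)⁻¹)⁻¹ (inv a b)) = _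
      have h0 : ((rho b)⁻¹)⁻¹ (inv a b) = a := by
        show rho b (inv a b) = a
        exact act_inv a b
      rw [h0]
      show m ((rho b)⁻¹ (m⁻¹ (n a))) = _
      have h1 : (rho b)⁻¹ (m⁻¹ (n a)) = inv (m⁻¹ (n a)) b := rfl
      rw [h1, hmhom.2]
      congr 1
      exact m.apply_symm_apply (n a)
end

section
/- Let A be a quandle, N a normal subgroup of Inn(A), and R any reflexive relation on A compatible with the quandle operations. Then the orbit congruence ∼_N permutes with R: ∼_N ∘ R = R ∘ ∼_N (where (S ∘ R)(a,b) means there exists c with R(a,c) and S(c,b)). -/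
open Quandle'

theorem stmt8 {A : Type*} [Quandle' A] (N : Subgroup (Equiv.Perm A))
    (hle : N ≤ Inn A) (hnorm : ∀ g ∈ Inn A, ∀ n ∈ N, g * n * g⁻¹ ∈ N)
    (R : A → A → Prop) (hrefl : ∀ a, R a a)
    (hcompat : ∀ a b a' b', R a b → R a' b' →
      R (act a a') (act b b') ∧ R (inv a a') (inv b b')) :
    relComp (orbitRel N) R = relComp R (orbitRel N) := by
  have key : ∀ g ∈ Inn A, ∀ x y, R x y → R (g x) (g y) ∧ R (g⁻¹ x) (g⁻¹ y) := by
    intro g hg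
    refine Subgroup.closure_induction ?_ ?_ ?_ ?_ hg
    · rintro _ ⟨b, rfl⟩ x y hxy
      exact ⟨(hcompat x y b b hxy (hrefl b)).1, (hcompat x y b b hxy (hrefl b)).2⟩
    · intro x y hxy
      exact ⟨by simpa using hxy, by simpa using hxy⟩
    · intro g h _ _ hgp hhp x y hxy
      constructor
      · show R (g (h x)) (g (h y))
        exact (hgp _ _ (hhp x y hxy).1).1
      · show R ((g * h)⁻¹ x) ((g * h)⁻¹ y)
        have := (hhp _ _ (hgp x y hxy).2).2
        simpa [mul_inv_rev, Equiv.Perm.mul_apply] using this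
    · intro g _ hgp x y hxy
      exact ⟨(hgp x y hxy).2, by simpa using (hgp x y hxy).1⟩
  funext a b
  apply propext
  constructor
  · rintro ⟨c, hac, n, hn, rfl⟩
    exact ⟨n a, ⟨n, hn, rfl⟩, (key n (hle hn) a c hac).1⟩
  · rintro ⟨c, ⟨n, hn, rfl⟩, hcb⟩
    refine ⟨n⁻¹ b, ?_, ?_⟩
    · have := (key n (hle hn) (n a) b hcb).2
      simpa using this
    · exact ⟨n, hn, by simp⟩
end

section
/- Let f : A → B be a surjective quandle homomorphism and R a congruence on A such that R ∘ Eq(f) = Eq(f) ∘ R, where Eq(f) = {(a,a') : f(a) = f(a')}. Then the image relation f(R) = {(f(a), f(a')) : (a,a') ∈ R} is a congruence on B. -/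
open Quandle'

theorem stmt9 {A B : Type*} [Quandle' A] [Quandle' B] (f : A → B)
    (hf : Function.Surjective f) (hhom : IsQuandleHom f)
    (R : A → A → Prop) (hR : IsCongruence R)
    (hperm : relComp R (eqRel f) = relComp (eqRel f) R) :
    IsCongruence (imageRel f R) := by

  obtain ⟨⟨hrefl, hsymm, htrans⟩, hcomp⟩ := hR
  constructor
  · constructor
    · intro b
      obtain ⟨a, rfl⟩ := hf b
      exact ⟨a, a, hrefl a, rfl, rfl⟩
    · rintro x y ⟨a, a', h, rfl, rfl⟩
      exact ⟨a', a, hsymm h, rfl, rfl⟩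
    · rintro x y z ⟨a, a', h1, rfl, rfl⟩ ⟨c, c', h2, hcc, rfl⟩
      have h3 : relComp R (eqRel f) a' c' := ⟨c, hcc.symm, h2⟩
      rw [hperm] at h3
      obtain ⟨d, hd1, hd2⟩ := h3
      exact ⟨a, d, htrans h1 hd1, rfl, hd2⟩
  · rintro x x' y y' ⟨a, b, h1, rfl, rfl⟩ ⟨a', b', h2, rfl, rfl⟩
    obtain ⟨hc1, hc2⟩ := hcomp a a' b b' h1 h2
    exact ⟨⟨act a a', act b b', hc1, hhom.1 a a', hhom.1 b b'⟩,
           ⟨inv a a', inv b b', hc2, hhom.2 a a', hhom.2 b b'⟩⟩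
end

section
/- A surjective quandle homomorphism f : A → B is a normal extension (i.e., the first projection Eq(f) → A from the kernel congruence is a trivial extension) if and only if the following condition (N) holds: for all a_0,…,a_n ∈ A and exponents α_1,…,α_n ∈ {−1,1}, if a_0 ◁^{α_1} a_1 ◁^{α_2} ⋯ ◁^{α_n} a_n = a_0, then a'_0 ◁^{α_1} a'_1 ⋯ ◁^{α_n} a'_n = a'_0 for all a'_i with f(a'_i) = f(a_i). -/
open Quandle'

/-!
Two elements of a quandle lie in the same connected component exactly when one is obtained from
the other by evaluating a word. A word in `Eq(f)` is the same as a pair of words in `A` with equal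
exponents and letters of equal image, and evaluating it commutes with both projections. Hence
condition (T) for the first projection says that whenever such a pair of words fixes the first
coordinate of a point of `Eq(f)` it also fixes the second, which is condition (N).
-/

section WordEval

variable {X Y : Type*} [Quandle' X] [Quandle' Y]

lemma wordEval_cons (a : X) (b : Bool) (x : X) (l : List (Bool × X)) :
    wordEval a ((b, x) :: l) = wordEval (if b then act a x else inv a x) l := rfl

lemma wordEval_append (a : X) (l l' : List (Bool × X)) :
    wordEval a (l ++ l') = wordEval (wordEval a l) l' :=
  List.foldl_append

lemma IsQuandleHom.map_wordEval {g : X → Y} (hg : IsQuandleHom g) (a : X)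
    (l : List (Bool × X)) :
    g (wordEval a l) = wordEval (g a) (l.map (Prod.map id g)) := by
  induction l generalizing a with
  | nil => rfl
  | cons p l ih =>
    obtain ⟨b, x⟩ := p
    rw [List.map_cons, wordEval_cons, ih]
    cases b
    · exact congrArg (wordEval · _) (hg.2 a x)
    · exact congrArg (wordEval · _) (hg.1 a x)

lemma sameComponent_refl (a : X) : sameComponent a a :=
  ⟨1, one_mem _, rfl⟩

lemma sameComponent.trans {a b c : X} (hab : sameComponent a b) (hbc : sameComponent b c) :
    sameComponent a c := by
  obtain ⟨n, hn, rfl⟩ := hab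
  obtain ⟨m, hm, rfl⟩ := hbc
  exact ⟨m * n, mul_mem hm hn, rfl⟩

lemma sameComponent_act_or_inv (a : X) (b : Bool) (x : X) :
    sameComponent a (if b then act a x else inv a x) := by
  cases b
  · exact ⟨(rho x)⁻¹, inv_mem (Subgroup.subset_closure ⟨x, rfl⟩), rfl⟩
  · exact ⟨rho x, Subgroup.subset_closure ⟨x, rfl⟩, rfl⟩

lemma sameComponent_wordEval (a : X) (l : List (Bool × X)) : sameComponent a (wordEval a l) := by
  induction l generalizing a with
  | nil => exact sameComponent_refl a
  | cons p l ih => exact (sameComponent_act_or_inv a p.1 p.2).trans (ih _)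

lemma exists_wordEval_eq_of_mem_Inn {n : Equiv.Perm X} (hn : n ∈ Inn X) (a : X) :
    ∃ l : List (Bool × X), wordEval a l = n a := by
  induction hn using Subgroup.closure_induction'' generalizing a with
  | mem _ hx =>
    obtain ⟨x, rfl⟩ := hx
    exact ⟨[(true, x)], rfl⟩
  | inv_mem _ hx =>
    obtain ⟨x, rfl⟩ := hx
    exact ⟨[(false, x)], rfl⟩
  | one => exact ⟨[], rfl⟩
  | mul n m _ _ ihn ihm =>
    obtain ⟨l, hl⟩ := ihm a
    obtain ⟨l', hl'⟩ := ihn (m a)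
    exact ⟨l ++ l', by rw [wordEval_append, hl, hl', Equiv.Perm.mul_apply]⟩

theorem sameComponent_iff_exists_wordEval {a b : X} :
    sameComponent a b ↔ ∃ l : List (Bool × X), wordEval a l = b := by
  constructor
  · rintro ⟨n, hn, rfl⟩
    exact exists_wordEval_eq_of_mem_Inn hn a
  · rintro ⟨l, rfl⟩
    exact sameComponent_wordEval a l

end WordEval

section Pullback

variable {A B C : Type*} {f : A → C} {g : B → C}

theorem forall₂_iff_exists_pullback_word {l : List (Bool × A)} {l' : List (Bool × B)} :
    List.Forall₂ (fun p q => p.1 = q.1 ∧ f p.2 = g q.2) l l' ↔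
      ∃ w : List (Bool × Pullback f g),
        w.map (Prod.map id fun q => q.1.1) = l ∧ w.map (Prod.map id fun q => q.1.2) = l' := by
  constructor
  · intro h
    induction h with
    | nil => exact ⟨[], rfl, rfl⟩
    | @cons p q _ _ hpq _ ih =>
      obtain ⟨w, rfl, rfl⟩ := ih
      obtain ⟨b, x⟩ := p
      obtain ⟨b', y⟩ := q
      obtain ⟨rfl, hxy⟩ := hpq
      exact ⟨(b, ⟨(x, y), hxy⟩) :: w, rfl, rfl⟩
  · rintro ⟨w, rfl, rfl⟩
    rw [List.forall₂_map_left_iff, List.forall₂_map_right_iff, List.forall₂_same]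
    exact fun q _ => ⟨rfl, q.2.2⟩

variable [Quandle' A] [Quandle' B] [Quandle' C]

lemma isQuandleHom_pullback_fst (hf : IsQuandleHom f) (hg : IsQuandleHom g) :
    letI := pullbackQuandle f g hf hg
    IsQuandleHom fun p : Pullback f g => p.1.1 :=
  ⟨fun _ _ => rfl, fun _ _ => rfl⟩

lemma isQuandleHom_pullback_snd (hf : IsQuandleHom f) (hg : IsQuandleHom g) :
    letI := pullbackQuandle f g hf hg
    IsQuandleHom fun p : Pullback f g => p.1.2 :=
  ⟨fun _ _ => rfl, fun _ _ => rfl⟩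

end Pullback

theorem stmt11_general {A B : Type*} [Quandle' A] [Quandle' B] (f : A → B)
    (hhom : IsQuandleHom f) :
    (letI : Quandle' (Pullback f f) := pullbackQuandle f f hhom hhom
     IsTrivialExt (fun p : Pullback f f => p.1.1)) ↔ CondN f := by
  let _ : Quandle' (Pullback f f) := pullbackQuandle f f hhom hhom
  have hfst := isQuandleHom_pullback_fst hhom hhom
  have hsnd := isQuandleHom_pullback_snd hhom hhom
  constructor
  · rintro ⟨-, -, htriv⟩ a₀ l hl a₀' l' hfa hll'
    obtain ⟨w, rfl, rfl⟩ := forall₂_iff_exists_pullback_word.mp hll'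
    let p : Pullback f f := ⟨(a₀, a₀'), hfa.symm⟩
    have hp : p = wordEval p w :=
      htriv _ _ (hl.symm.trans (hfst.map_wordEval p w).symm) (sameComponent_wordEval p w)
    calc wordEval a₀' _ = (wordEval p w).1.2 := (hsnd.map_wordEval p w).symm
      _ = a₀' := by rw [← hp]
  · intro hN
    refine ⟨fun a => ⟨⟨(a, a), rfl⟩, rfl⟩, hfst, fun p q hpq hpq' => ?_⟩
    obtain ⟨w, rfl⟩ := sameComponent_iff_exists_wordEval.mp hpq'
    have hw := hN p.1.1 _ ((hfst.map_wordEval p w).symm.trans hpq.symm) p.1.2 _ p.2.symm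
      (forall₂_iff_exists_pullback_word.mpr ⟨w, rfl, rfl⟩)
    exact Subtype.ext (Prod.ext hpq ((hsnd.map_wordEval p w).trans hw).symm)

theorem stmt11 {A B : Type*} [Quandle' A] [Quandle' B] (f : A → B)
    (hf : Function.Surjective f) (hhom : IsQuandleHom f) :
    (letI : Quandle' (Pullback f f) := pullbackQuandle f f hhom hhom
     IsTrivialExt (fun p : Pullback f f => p.1.1)) ↔ CondN f :=
  stmt11_general f hhom
end

section
/- Every normal quandle extension is a quandle covering: if a surjective quandle homomorphism f : A → B satisfies condition (N) (whenever a_0 ◁^{α_1} a_1 ⋯ ◁^{α_n} a_n = a_0 with exponents α_i ∈ {−1,1}, the same holds after replacing each a_i by any a'_i with f(a'_i) = f(a_i)), then f(a) = f(a') implies c ◁ a = c ◁ a' for all c ∈ A. -/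
open Quandle'

theorem stmt12 {A B : Type*} [Quandle' A] [Quandle' B] (f : A → B)
    (hf : IsNormalExt f) :
    ∀ a a' c, f a = f a' → act c a = act c a' := by
  obtain ⟨hsurj, hhom, hN⟩ := hf
  intro a a' c hfa
  have h := hN c [(true, a), (false, a)] (by simp [wordEval, inv_act]) c
    [(true, a), (false, a')] rfl
    (by constructor; · exact ⟨rfl, rfl⟩
        constructor; · exact ⟨rfl, hfa⟩
        exact List.Forall₂.nil)
  have h' : inv (act c a) a' = c := by simpa [wordEval] using h
  have := act_inv (act c a) a'
  rw [h'] at this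
  exact this.symm
end

section
/- There exists a quandle covering which is not a normal extension: the 4-element involutive quandle A = {a,b,c,d} with a ◁ c = a, b ◁ c = d, d ◁ c = b, c ◁ x = c for all x, and all other products trivial (x ◁ y = x), together with the map f to the 2-element trivial quandle sending a, b, d ↦ x and c ↦ y, is a surjective quandle homomorphism which is a covering (f(u) = f(v) implies w ◁ u = w ◁ v for all w) but not normal (f(a) = f(b) and a ◁ c = a, yet b ◁ c = d ≠ b). -/
open Quandle'

/-- The four-element quandle of the example. -/
inductive Q4 | a | b | c | d
  deriving DecidableEq

instance : Fintype Q4 :=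
  Fintype.ofList [Q4.a, Q4.b, Q4.c, Q4.d] (fun x => by cases x <;> simp)

/-- The operation: `b ◁ c = d`, `d ◁ c = b`, and `x ◁ y = x` otherwise. -/
def q4act : Q4 → Q4 → Q4
  | Q4.b, Q4.c => Q4.d
  | Q4.d, Q4.c => Q4.b
  | x, _ => x

instance : Quandle' Q4 where
  act := q4act
  inv := q4act
  idem := by decide
  inv_act := by decide
  act_inv := by decide
  distrib := by decide

/-- The two-element trivial quandle, on `Bool`. -/
instance : Quandle' Bool where
  act x _ := x
  inv x _ := x
  idem _ := rfl
  inv_act _ _ := rfl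
  act_inv _ _ := rfl
  distrib _ _ _ := rfl

/-- The map sending `a, b, d` to one element and `c` to the other. -/
def fQ4 : Q4 → Bool := fun x => x = Q4.c

namespace CondN

variable {A B : Type*} [Quandle' A] [Quandle' B] {f : A → B}

theorem act_eq_self_of_act_eq_self (hf : CondN f) {a a' c : A} (hfa : f a' = f a)
    (hac : act a c = a) : act a' c = a' :=
  hf a [(true, c)] hac a' [(true, c)] hfa (.cons ⟨rfl, rfl⟩ .nil)

end CondN

theorem fQ4_surjective : Function.Surjective fQ4
  | false => ⟨Q4.a, rfl⟩
  | true => ⟨Q4.c, rfl⟩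

theorem isQuandleHom_fQ4 : IsQuandleHom fQ4 :=
  ⟨by decide, by decide⟩

theorem Q4.act_eq_act_of_fQ4_eq {u v : Q4} (h : fQ4 u = fQ4 v) (w : Q4) :
    act w u = act w v := by
  revert u v w
  decide

theorem stmt13 : IsCovering fQ4 ∧ ¬ IsNormalExt fQ4 := by
  refine ⟨⟨fQ4_surjective, isQuandleHom_fQ4, fun _ _ w h => Q4.act_eq_act_of_fQ4_eq h w⟩, ?_⟩
  rintro ⟨-, -, hN⟩
  have hbd : act Q4.b Q4.c = Q4.b :=
    hN.act_eq_self_of_act_eq_self (a := Q4.a) rfl rfl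
  exact absurd hbd (by decide)
end

section
/- Let f : A → B and g : A → C be surjective quandle homomorphisms whose kernel congruences permute: Eq(f) ∘ Eq(g) = Eq(g) ∘ Eq(f). If a commutative square with f, g and surjective homomorphisms f̄ : C → D, ḡ : B → D (ḡ ∘ f = f̄ ∘ g) is a pushout, then the canonical map ⟨f, g⟩ : A → B ×_D C into the pullback is surjective. -/
open Quandle'

theorem stmt14 {A B C D : Type u} [Quandle' A] [Quandle' B] [Quandle' C] [Quandle' D]
    (f : A → B) (g : A → C) (fbar : C → D) (gbar : B → D)
    (hf : Function.Surjective f) (hg : Function.Surjective g)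
    (hfbar : Function.Surjective fbar) (hgbar : Function.Surjective gbar)
    (hfh : IsQuandleHom f) (hgh : IsQuandleHom g)
    (hfbarh : IsQuandleHom fbar) (hgbarh : IsQuandleHom gbar)
    (hcomm : ∀ a, gbar (f a) = fbar (g a))
    (hperm : relComp (eqRel f) (eqRel g) = relComp (eqRel g) (eqRel f))
    (hpush : ∀ (T : Type u) [Quandle' T] (u : B → T) (v : C → T),
      IsQuandleHom u → IsQuandleHom v → (∀ a, u (f a) = v (g a)) →
      ∃! w : D → T, IsQuandleHom w ∧ (∀ b, w (gbar b) = u b) ∧ ∀ c, w (fbar c) = v c) :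
    ∀ (b : B) (c : C), gbar b = fbar c → ∃ a, f a = b ∧ g a = c := by
  intro b c hbc
  -- The relation R on B: image of Eq(g) along f
  set R : B → B → Prop := fun b b' => ∃ a a', g a = g a' ∧ f a = b ∧ f a' = b' with hRdef
  have Rrefl : ∀ x, R x x := fun x => by
    obtain ⟨a, ha⟩ := hf x; exact ⟨a, a, rfl, ha, ha⟩
  have Rsymm : ∀ {x y}, R x y → R y x := by
    rintro x y ⟨a, a', h1, h2, h3⟩; exact ⟨a', a, h1.symm, h3, h2⟩
  have Rtrans : ∀ {x y z}, R x y → R y z → R x z := by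
    rintro x y z ⟨a₁, a₂, h1, h2, h3⟩ ⟨a₃, a₄, h4, h5, h6⟩
    have hc : relComp (eqRel g) (eqRel f) a₂ a₄ := ⟨a₃, h3.trans h5.symm, h4⟩
    rw [← hperm] at hc
    obtain ⟨a₅, hg5, hf5⟩ := hc
    exact ⟨a₁, a₅, h1.trans hg5, h2, hf5.trans h6⟩
  have Rcongr : ∀ {x y x' y'}, R x y → R x' y' →
      R (act x x') (act y y') ∧ R (inv x x') (inv y y') := by
    rintro x y x' y' ⟨a₁, a₂, h1, h2, h3⟩ ⟨a₁', a₂', h1', h2', h3'⟩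
    constructor
    · refine ⟨act a₁ a₁', act a₂ a₂', ?_, ?_, ?_⟩
      · rw [hgh.1, hgh.1, h1, h1']
      · rw [hfh.1, h2, h2']
      · rw [hfh.1, h3, h3']
    · refine ⟨inv a₁ a₁', inv a₂ a₂', ?_, ?_, ?_⟩
      · rw [hgh.2, hgh.2, h1, h1']
      · rw [hfh.2, h2, h2']
      · rw [hfh.2, h3, h3']
  letI S : Setoid B := ⟨R, fun x => Rrefl x, fun h => Rsymm h, fun h h' => Rtrans h h'⟩
  letI : Quandle' (Quotient S) :=
    { act := Quotient.map₂ act (fun _ _ h _ _ h' => (Rcongr h h').1)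
      inv := Quotient.map₂ inv (fun _ _ h _ _ h' => (Rcongr h h').2)
      idem := fun q => Quotient.inductionOn q fun a => congrArg (Quotient.mk S) (idem a)
      inv_act := fun q r => Quotient.inductionOn₂ q r fun a b =>
        congrArg (Quotient.mk S) (inv_act a b)
      act_inv := fun q r => Quotient.inductionOn₂ q r fun a b =>
        congrArg (Quotient.mk S) (act_inv a b)
      distrib := fun q r s => Quotient.inductionOn₃ q r s fun a b c =>
        congrArg (Quotient.mk S) (distrib a b c) }
  -- the map v : C → Quotient S
  set v : C → Quotient S := fun c => Quotient.mk S (f (hg c).choose) with hvdef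
  have vkey : ∀ a : A, v (g a) = Quotient.mk S (f a) := fun a =>
    Quotient.sound ⟨(hg (g a)).choose, a, (hg (g a)).choose_spec, rfl, rfl⟩
  have vhom : IsQuandleHom v := by
    constructor
    · intro c c'
      obtain ⟨a, rfl⟩ := hg c
      obtain ⟨a', rfl⟩ := hg c'
      rw [vkey, vkey, ← hgh.1, vkey]
      exact congrArg (Quotient.mk S) (hfh.1 a a')
    · intro c c'
      obtain ⟨a, rfl⟩ := hg c
      obtain ⟨a', rfl⟩ := hg c'
      rw [vkey, vkey, ← hgh.2, vkey]
      exact congrArg (Quotient.mk S) (hfh.2 a a')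
  have qhom : IsQuandleHom (Quotient.mk S : B → Quotient S) :=
    ⟨fun _ _ => rfl, fun _ _ => rfl⟩
  obtain ⟨w, ⟨_, wg, wf⟩, _⟩ :=
    hpush (Quotient S) (Quotient.mk S) v qhom vhom (fun a => (vkey a).symm)
  obtain ⟨a, ha⟩ := hg c
  have hq : Quotient.mk S b = Quotient.mk S (f a) := by
    rw [← wg b, hbc, wf c, ← ha, vkey]
  obtain ⟨a₁, a₂, hg12, hf1, hf2⟩ := Quotient.exact hq
  have hc : relComp (eqRel f) (eqRel g) a₁ a := ⟨a₂, hg12, hf2⟩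
  rw [hperm] at hc
  obtain ⟨a', hfa', hga'⟩ := hc
  exact ⟨a', hfa'.symm.trans hf1, hga'.trans ha⟩
end

section
/- Let f : A → B be a surjective quandle homomorphism, and let R_c be the congruence on A generated by the relation R = {(z ◁ x, z ◁ x') : z, x, x' ∈ A, f(x) = f(x')}. Then R_c ⊆ Eq(f), so f factors through the quotient q : A → A/R_c via a unique homomorphism c : A/R_c → B, and c is a quandle covering: c([a]) = c([a']) implies [z] ◁ [a] = [z] ◁ [a'] for all z ∈ A. -/
open Quandle'

theorem stmt17 {A B : Type*} [Quandle' A] [Quandle' B] (f : A → B)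
    (hf : Function.Surjective f) (hhom : IsQuandleHom f) :
    let R : A → A → Prop := fun u v =>
      ∃ z x x', f x = f x' ∧ u = act z x ∧ v = act z x'
    letI : Quandle' (Quotient (congClosureSetoid R)) := quotQuandle R
    (∀ a a', congClosure R a a' → f a = f a') ∧
    ∃ c : Quotient (congClosureSetoid R) → B,
      (∀ a, c (Quotient.mk (congClosureSetoid R) a) = f a) ∧ IsQuandleHom c ∧ IsCovering c ∧
      ∀ c' : Quotient (congClosureSetoid R) → B,
        (∀ a, c' (Quotient.mk (congClosureSetoid R) a) = f a) → c' = c := by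
  intro R
  have hcong : IsCongruence (eqRel f) := by
    refine ⟨⟨fun a => rfl, fun h => h.symm, fun h h' => h.trans h'⟩, ?_⟩
    intro a a' b b' h h'
    constructor
    · show f (act a a') = f (act b b')
      rw [hhom.1, hhom.1, h, h']
    · show f (inv a a') = f (inv b b')
      rw [hhom.2, hhom.2, h, h']
  have hRsub : ∀ x y, R x y → eqRel f x y := by
    rintro x y ⟨z, u, u', huu, rfl, rfl⟩
    show f (act z u) = f (act z u')
    rw [hhom.1, hhom.1, huu]
  have h1 : ∀ a a', congClosure R a a' → f a = f a' :=
    fun a a' h => h (eqRel f) hcong hRsub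
  refine ⟨h1, Quotient.lift f h1, fun a => rfl, ?_, ?_, ?_⟩
  · constructor
    · intro q q'
      refine Quotient.inductionOn₂ q q' fun a a' => ?_
      show f (act a a') = act (f a) (f a')
      exact hhom.1 a a'
    · intro q q'
      refine Quotient.inductionOn₂ q q' fun a a' => ?_
      exact hhom.2 a a'
  · refine ⟨?_, ?_, ?_⟩
    · intro b
      obtain ⟨a, rfl⟩ := hf b
      exact ⟨Quotient.mk _ a, rfl⟩
    · exact ⟨fun q q' => Quotient.inductionOn₂ q q' fun a a' => hhom.1 a a',
        fun q q' => Quotient.inductionOn₂ q q' fun a a' => hhom.2 a a'⟩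
    · intro q q' r hqq
      refine Quotient.inductionOn₃ q q' r (fun a a' z h => ?_) hqq
      show Quotient.mk _ (act z a) = Quotient.mk _ (act z a')
      refine Quotient.sound ?_
      intro S hS hR
      exact hR _ _ ⟨z, a, a', h, rfl, rfl⟩
  · intro c' hc'
    funext q
    refine Quotient.inductionOn q fun a => ?_
    exact hc' a
end

section
/- Universality of the centralization: let f : A → B be a surjective quandle homomorphism, R_c the congruence on A generated by {(z ◁ x, z ◁ x') : f(x) = f(x')}, and c : A/R_c → B the induced covering. For any factorization f = c' ∘ q' with q' : A → A' surjective and c' : A' → B a quandle covering, there exists a unique quandle homomorphism φ : A/R_c → A' with φ ∘ q_{R_c} = q' and c' ∘ φ = c. -/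
open Quandle'

theorem stmt18 {A B A' : Type*} [Quandle' A] [Quandle' B] [Quandle' A']
    (f : A → B) (hf : Function.Surjective f) (hhom : IsQuandleHom f)
    (q' : A → A') (hq' : Function.Surjective q') (hq'h : IsQuandleHom q')
    (c' : A' → B) (hc' : IsCovering c') (hfact : ∀ a, c' (q' a) = f a) :
    let R : A → A → Prop := fun u v =>
      ∃ z x x', f x = f x' ∧ u = act z x ∧ v = act z x'
    letI : Quandle' (Quotient (congClosureSetoid R)) := quotQuandle R
    ∃! φ : Quotient (congClosureSetoid R) → A',
      IsQuandleHom φ ∧ (∀ a, φ (Quotient.mk (congClosureSetoid R) a) = q' a) ∧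
        ∀ a, c' (φ (Quotient.mk (congClosureSetoid R) a)) = f a := by
  intro R
  have hker : IsCongruence (eqRel q') := by
    refine ⟨⟨fun a => rfl, fun h => h.symm, fun h1 h2 => h1.trans h2⟩, ?_⟩
    intro a a' b b' h1 h2
    constructor
    · show q' (act a a') = q' (act b b')
      rw [hq'h.1, hq'h.1, h1, h2]
    · show q' (inv a a') = q' (inv b b')
      rw [hq'h.2, hq'h.2, h1, h2]
  have hRker : ∀ x y, R x y → eqRel q' x y := by
    rintro u v ⟨z, x, x', hxx', rfl, rfl⟩
    show q' (act z x) = q' (act z x')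
    rw [hq'h.1, hq'h.1]
    exact hc'.2.2 (q' x) (q' x') (q' z) (by rw [hfact, hfact, hxx'])
  have hlift : ∀ a b : A, congClosure R a b → q' a = q' b :=
    fun a b h => h (eqRel q') hker hRker
  refine ⟨Quotient.lift q' hlift, ⟨?_, fun a => rfl, fun a => hfact a⟩, ?_⟩
  · constructor
    · intro a a'
      induction a using Quotient.inductionOn
      induction a' using Quotient.inductionOn
      exact hq'h.1 _ _
    · intro a a'
      induction a using Quotient.inductionOn
      induction a' using Quotient.inductionOn
      exact hq'h.2 _ _
  · rintro ψ ⟨hψhom, hψq, hψc⟩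
    funext x
    induction x using Quotient.inductionOn with
    | h a => exact hψq a
end

section
/- In the category of quandles, a class of surjective homomorphisms closed under composition with isomorphisms and satisfying the condition (N) characterization of normality is closed under 'subobjects' in the following sense: given a commutative square α_0 ∘ f = g ∘ α_1 with f : A → B, g : C → D surjective quandle homomorphisms and α_1 : A → C injective, if g is a normal extension then f is a normal extension. -/
open Quandle'

theorem wordEval_map {A B : Type*} [Quandle' A] [Quandle' B] {h : A → B}
    (hh : IsQuandleHom h) (a : A) (l : List (Bool × A)) :
    h (wordEval a l) = wordEval (h a) (l.map (fun p => (p.1, h p.2))) := by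
  induction l generalizing a with
  | nil => rfl
  | cons p t ih =>
    simp only [wordEval, List.foldl_cons, List.map_cons] at *
    cases hb : p.1
    · simp only [Bool.false_eq_true, if_false]; rw [ih, hh.2]
    · simp only [if_true]; rw [ih, hh.1]

theorem stmt19 {A B C D : Type*} [Quandle' A] [Quandle' B] [Quandle' C] [Quandle' D]
    (f : A → B) (g : C → D) (α₁ : A → C) (α₀ : B → D)
    (hf : Function.Surjective f) (hfh : IsQuandleHom f)
    (hg : Function.Surjective g) (hgh : IsQuandleHom g)
    (hα₁ : IsQuandleHom α₁) (hα₀ : IsQuandleHom α₀) (hinj : Function.Injective α₁)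
    (hcomm : ∀ a, α₀ (f a) = g (α₁ a))
    (hn : IsNormalExt g) : IsNormalExt f := by
  refine ⟨hf, hfh, ?_⟩
  intro a₀ l hl a₀' l' hf0 hfor
  apply hinj
  rw [wordEval_map hα₁]
  refine hn.2.2 (α₁ a₀) (l.map (fun p => (p.1, α₁ p.2))) ?_ (α₁ a₀')
      (l'.map (fun p => (p.1, α₁ p.2))) ?_ ?_
  · rw [← wordEval_map hα₁, hl]
  · rw [← hcomm, ← hcomm, hf0]
  · rw [List.forall₂_map_right_iff, List.forall₂_map_left_iff]
    refine hfor.imp fun {p q} hpq => ⟨hpq.1, ?_⟩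
    simp only [← hcomm, hpq.2]
end
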